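/- arXiv:1508.04260 — 4 statements merged into one kernel-verified Lean document; each statement's English description precedes it below -/
import Mathlib

section
/- Let S be a commutative ring with identity, R a unitary subring of S, and I, J ideals of S. If I ⊊ J ⊆ (R + I :_S S), then (I :_R (I :_S J)) ⊄ I. In particular, I is an R-conductor ideal of S if and only if (I :_R (I :_S (R + I :_S S))) ⊆ I. -/
/-- The conductor `(A :_S S) = {x ∈ S | x * S ⊆ A}` of an additive subgroup `A` of `S`,
as an ideal of `S`. -/
def condIdeal {S : Type*} [CommRing S] (A : AddSubgroup S) : Ideal S where
  carrier := {x : S | ∀ s : S, x * s ∈ A}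
  add_mem' := by
    intro x y hx hy s
    simpa [add_mul] using A.add_mem (hx s) (hy s)
  zero_mem' := by
    intro s
    simpa using A.zero_mem
  smul_mem' := by
    intro c x hx s
    have := hx (c * s)
    simpa [smul_eq_mul, mul_assoc, mul_comm, mul_left_comm] using this

/-- `R + I = {r + a | r ∈ R, a ∈ I}` as an additive subgroup of `S`. -/
def addSub {S : Type*} [CommRing S] (R : Subring S) (I : Ideal S) : AddSubgroup S where
  carrier := {x : S | ∃ r ∈ R, ∃ a ∈ I, x = r + a}
  zero_mem' := ⟨0, R.zero_mem, 0, I.zero_mem, by simp⟩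
  add_mem' := by
    rintro x y ⟨r, hr, a, ha, rfl⟩ ⟨r', hr', a', ha', rfl⟩
    exact ⟨r + r', R.add_mem hr hr', a + a', I.add_mem ha ha', by ring⟩
  neg_mem' := by
    rintro x ⟨r, hr, a, ha, rfl⟩
    exact ⟨-r, R.neg_mem hr, -a, I.neg_mem ha, by ring⟩

/-- `I` is an `R`-conductor ideal of `S` if `I = (V :_S S)` for some intermediate ring
`R ⊆ V ⊆ S`. -/
def IsConductorIdeal {S : Type*} [CommRing S] (R : Subring S) (I : Ideal S) : Prop :=
  ∃ V : Subring S, R ≤ V ∧ I = condIdeal V.toAddSubgroup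

/-! Each `j ∈ J ⊆ (R + I :_S S)` decomposes as `j = r + a` with `r ∈ R` and `a ∈ I`; then
`r = j - a ∈ J ∩ R`, so `r` lies in `(I :_R (I :_S J))`. Hence if that set is inside `I`, so is
`j`, i.e. `J ⊆ I`. For the second claim, `R + I` is itself an intermediate ring, and any conductor
`I = (V :_S S)` with `R ⊆ V` satisfies `R + I ⊆ V`, so `(R + I :_S S) ⊆ I` characterises
conductor ideals. -/

section

variable {S : Type*} [CommRing S]

lemma condIdeal_mono {A B : AddSubgroup S} (h : A ≤ B) : condIdeal A ≤ condIdeal B :=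
  fun _ hx s => h (hx s)

lemma le_condIdeal_addSub (R : Subring S) (I : Ideal S) : I ≤ condIdeal (addSub R I) :=
  fun a ha s => ⟨0, R.zero_mem, a * s, I.mul_mem_right s ha, by ring⟩

def addSubring (R : Subring S) (I : Ideal S) : Subring S :=
  { addSub R I with
    one_mem' := ⟨1, R.one_mem, 0, I.zero_mem, by ring⟩
    mul_mem' := by
      rintro x y ⟨r, hr, a, ha, rfl⟩ ⟨r', hr', a', ha', rfl⟩
      exact ⟨r * r', R.mul_mem hr hr', r * a' + a * r' + a * a',
        I.add_mem (I.add_mem (I.mul_mem_left r ha') (I.mul_mem_right r' ha))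
          (I.mul_mem_left a ha'), by ring⟩ }

lemma isConductorIdeal_iff_condIdeal_le {R : Subring S} {I : Ideal S} :
    IsConductorIdeal R I ↔ condIdeal (addSub R I) ≤ I := by
  constructor
  · rintro ⟨V, hRV, rfl⟩
    refine condIdeal_mono ?_
    rintro _ ⟨r, hr, a, ha, rfl⟩
    simpa using V.add_mem (hRV hr) (by simpa using ha 1)
  · intro hle
    exact ⟨addSubring R I, fun r hr => ⟨r, hr, 0, I.zero_mem, by ring⟩,
      le_antisymm (le_condIdeal_addSub R I) hle⟩

lemma colon_colon_subset_iff_le {R : Subring S} {I J : Ideal S} (hIJ : I ≤ J)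
    (hJ : J ≤ condIdeal (addSub R I)) :
    {x : S | x ∈ R ∧ ∀ y ∈ {z : S | ∀ j ∈ J, z * j ∈ I}, x * y ∈ I} ⊆ (I : Set S) ↔ J ≤ I := by
  constructor
  · intro hsub j hj
    obtain ⟨r, hr, a, ha, hja⟩ := hJ hj 1
    rw [mul_one] at hja
    have hrJ : r ∈ J := by
      simpa [hja] using J.sub_mem hj (hIJ ha)
    have hrI : r ∈ I := hsub ⟨hr, fun y hy => mul_comm y r ▸ hy r hrJ⟩
    exact hja ▸ I.add_mem hrI ha
  · rintro hle x ⟨-, hx⟩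
    simpa using hx 1 fun j hj => by simpa using hle hj

end

/-- If `I ⊊ J ⊆ (R + I :_S S)`, then `(I :_R (I :_S J)) ⊄ I`. In particular, `I` is an
`R`-conductor ideal of `S` if and only if `(I :_R (I :_S (R + I :_S S))) ⊆ I`. -/
theorem stmt_1 {S : Type*} [CommRing S] (R : Subring S) (I : Ideal S) :
    (∀ J : Ideal S, I < J → J ≤ condIdeal (addSub R I) →
      ¬ ({x : S | x ∈ R ∧ ∀ y ∈ {z : S | ∀ j ∈ J, z * j ∈ I}, x * y ∈ I} ⊆ (I : Set S))) ∧
    (IsConductorIdeal R I ↔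
      {x : S | x ∈ R ∧ ∀ y ∈ {z : S | ∀ w ∈ condIdeal (addSub R I), z * w ∈ I}, x * y ∈ I}
        ⊆ (I : Set S)) := by
  refine ⟨fun J hIJ hJ hsub => hIJ.not_ge ((colon_colon_subset_iff_le hIJ.le hJ).1 hsub), ?_⟩
  rw [isConductorIdeal_iff_condIdeal_le,
    colon_colon_subset_iff_le (le_condIdeal_addSub R I) le_rfl]
end

section
/- Let S be a commutative ring with identity, R a unitary subring of S, and I an ideal of S such that S/I is a Noetherian ring and R/(I ∩ R) is a principal ideal ring. Then I is an R-conductor ideal of S if and only if for every prime ideal M of S containing I, either R + M ⊊ S or (I :_R M) ⊆ I. -/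
theorem mem_condIdeal {S : Type*} [CommRing S] (A : AddSubgroup S) (x : S) :
    x ∈ condIdeal A ↔ ∀ s : S, x * s ∈ A := Iff.rfl

theorem mem_addSub {S : Type*} [CommRing S] (R : Subring S) (I : Ideal S) (x : S) :
    x ∈ addSub R I ↔ ∃ r ∈ R, ∃ a ∈ I, x = r + a := Iff.rfl

/-- `R + I` as a subring of `S`. -/
def rPlusI {S : Type*} [CommRing S] (R : Subring S) (I : Ideal S) : Subring S where
  carrier := {x : S | ∃ r ∈ R, ∃ a ∈ I, x = r + a}
  zero_mem' := ⟨0, R.zero_mem, 0, I.zero_mem, by simp⟩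
  one_mem' := ⟨1, R.one_mem, 0, I.zero_mem, by simp⟩
  add_mem' := by
    rintro x y ⟨r, hr, a, ha, rfl⟩ ⟨r', hr', a', ha', rfl⟩
    exact ⟨r + r', R.add_mem hr hr', a + a', I.add_mem ha ha', by ring⟩
  neg_mem' := by
    rintro x ⟨r, hr, a, ha, rfl⟩
    exact ⟨-r, R.neg_mem hr, -a, I.neg_mem ha, by ring⟩
  mul_mem' := by
    rintro x y ⟨r, hr, a, ha, rfl⟩ ⟨r', hr', a', ha', rfl⟩
    refine ⟨r * r', R.mul_mem hr hr', r * a' + a * r' + a * a', ?_, by ring⟩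
    exact I.add_mem (I.add_mem (I.mul_mem_left _ ha') (I.mul_mem_right _ ha))
      (I.mul_mem_right _ ha)

theorem mem_rPlusI {S : Type*} [CommRing S] (R : Subring S) (I : Ideal S) (x : S) :
    x ∈ rPlusI R I ↔ ∃ r ∈ R, ∃ a ∈ I, x = r + a := Iff.rfl

/-- The annihilator of an element as an ideal. -/
def annE {T : Type*} [CommRing T] (w : T) : Ideal T where
  carrier := {t : T | t * w = 0}
  zero_mem' := by simp
  add_mem' := by
    intro a b ha hb
    simp only [Set.mem_setOf_eq] at *
    rw [add_mul, ha, hb, add_zero]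
  smul_mem' := by
    intro c a ha
    simp only [Set.mem_setOf_eq, smul_eq_mul] at *
    rw [mul_assoc, ha, mul_zero]

theorem mem_annE {T : Type*} [CommRing T] (w t : T) : t ∈ annE w ↔ t * w = 0 := Iff.rfl

/-- Main theorem: if `S/I` is Noetherian and `R/(I ∩ R)` is a principal ideal ring, then
`I` is an `R`-conductor ideal of `S` if and only if for every prime ideal `M` of `S`
containing `I` we have `R + M ⊊ S` or `(I :_R M) ⊆ I`. -/
theorem stmt_11 {S : Type*} [CommRing S] (R : Subring S) (I : Ideal S)
    (hN : IsNoetherianRing (S ⧸ I))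
    (hP : IsPrincipalIdealRing (↥R ⧸ I.comap R.subtype)) :
    IsConductorIdeal R I ↔
      ∀ M : Ideal S, M.IsPrime → I ≤ M →
        addSub R M ≠ ⊤ ∨ {x : S | x ∈ R ∧ ∀ m ∈ M, x * m ∈ I} ⊆ (I : Set S) := by
  constructor
  · rintro ⟨V, hRV, hIV⟩ M hM hIM
    by_cases htop : addSub R M = ⊤
    · right
      rintro x ⟨hxR, hxM⟩
      show x ∈ I
      rw [hIV, mem_condIdeal]
      intro s
      have hs : s ∈ addSub R M := htop ▸ AddSubgroup.mem_top s
      obtain ⟨r, hr, m, hm, rfl⟩ := hs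
      have h1 : x * r ∈ V := V.mul_mem (hRV hxR) (hRV hr)
      have h2 : x * m ∈ V := by
        have hxmI : x * m ∈ I := hxM m hm
        rw [hIV, mem_condIdeal] at hxmI
        simpa using hxmI 1
      simpa [mul_add] using V.add_mem h1 h2
    · left; exact htop
  · intro hyp
    refine ⟨rPlusI R I, fun r hr => ⟨r, hr, 0, I.zero_mem, by simp⟩, le_antisymm ?_ ?_⟩
    · intro a ha s
      exact ⟨0, R.zero_mem, a * s, I.mul_mem_right s ha, by simp⟩
    by_contra hC
    obtain ⟨x₀, hx₀C, hx₀I⟩ := Set.not_subset.mp hC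
    set C : Ideal S := condIdeal (rPlusI R I).toAddSubgroup with hCdef
    set K : Ideal ↥R := I.comap R.subtype with hKdef
    have hIC : I ≤ C := fun a ha s =>
      ⟨0, R.zero_mem, a * s, I.mul_mem_right s ha, by simp⟩
    set CR : Ideal ↥R := C.comap R.subtype with hCRdef
    -- get a generator of the image of CR in R/K
    obtain ⟨ξ, hξ⟩ := (hP.principal (CR.map (Ideal.Quotient.mk K))).principal
    obtain ⟨x', hx'⟩ := Ideal.Quotient.mk_surjective ξ
    have hx'CR : x' ∈ CR := by
      have : Ideal.Quotient.mk K x' ∈ CR.map (Ideal.Quotient.mk K) := by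
        rw [hξ, hx']
        exact Ideal.subset_span rfl
      rw [Ideal.mem_map_iff_of_surjective _ Ideal.Quotient.mk_surjective] at this
      obtain ⟨y, hyCR, hy⟩ := this
      have : x' - y ∈ K := Ideal.Quotient.eq.mp hy.symm
      have hKCR : (K : Set ↥R) ⊆ CR := fun a ha => hIC ha
      have hsub : x' - y ∈ CR := hKCR this
      simpa using CR.add_mem hsub hyCR
    have hgen : ∀ y ∈ CR, ∃ r : ↥R, y - x' * r ∈ K := by
      intro y hy
      have : Ideal.Quotient.mk K y ∈ CR.map (Ideal.Quotient.mk K) :=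
        Ideal.mem_map_of_mem _ hy
      rw [hξ, Submodule.mem_span_singleton] at this
      obtain ⟨t, ht⟩ := this
      obtain ⟨r, hr⟩ := Ideal.Quotient.mk_surjective t
      refine ⟨r, Ideal.Quotient.eq.mp ?_⟩
      rw [(Ideal.Quotient.mk K).map_mul, hx', hr, ← ht, smul_eq_mul]
      exact mul_comm t ξ
    set x : S := (x' : S) with hxdef
    have hxR : x ∈ R := x'.2
    have hxC : x ∈ C := hx'CR
    -- Step C : every element of C is of the form x * r + a with r ∈ R, a ∈ I
    have stepC : ∀ c ∈ C, ∃ r ∈ R, ∃ a ∈ I, c = x * r + a := by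
      intro c hc
      obtain ⟨r₀, hr₀, a₀, ha₀, hc1⟩ := (mem_condIdeal _ c).mp hc 1
      rw [mul_one] at hc1
      have hr₀C : r₀ ∈ C := by
        have : c - a₀ ∈ C := C.sub_mem hc (hIC ha₀)
        rwa [hc1, add_sub_cancel_right] at this
      obtain ⟨r, hr⟩ := hgen ⟨r₀, hr₀⟩ hr₀C
      have hrI : r₀ - x * (r : S) ∈ I := hr
      exact ⟨r, r.2, (r₀ - x * r) + a₀, I.add_mem hrI ha₀, by rw [hc1]; ring⟩
    have hxI : x ∉ I := by
      intro hxI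
      obtain ⟨r, hr, a, ha, h⟩ := stepC x₀ hx₀C
      exact hx₀I (h ▸ I.add_mem (I.mul_mem_right r hxI) ha)
    -- associated prime construction in S/I
    have hxbar : Ideal.Quotient.mk I x ≠ 0 := fun h => hxI (Ideal.Quotient.eq_zero_iff_mem.mp h)
    set 𝒮 : Set (Ideal (S ⧸ I)) :=
      {J | ∃ z : S, Ideal.Quotient.mk I (z * x) ≠ 0 ∧ J = annE (Ideal.Quotient.mk I (z * x))} with h𝒮def
    have hne : 𝒮.Nonempty := ⟨annE (Ideal.Quotient.mk I (1 * x)), 1, by simpa using hxbar, rfl⟩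
    obtain ⟨Mbar, hMbar𝒮, hmax⟩ := (set_has_maximal_iff_noetherian.mpr hN) 𝒮 hne
    obtain ⟨z₀, hz₀, hMbar⟩ := hMbar𝒮
    set y : S := z₀ * x with hydef
    have hyC : y ∈ C := C.mul_mem_left z₀ hxC
    have hyI : y ∉ I := by
      intro h
      exact hz₀ (Ideal.Quotient.eq_zero_iff_mem.mpr h)
    have hmemM : ∀ s : S, s ∈ Ideal.comap (Ideal.Quotient.mk I) Mbar ↔ s * y ∈ I := by
      intro s
      rw [Ideal.mem_comap, hMbar, mem_annE, ← (Ideal.Quotient.mk I).map_mul,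
        Ideal.Quotient.eq_zero_iff_mem]
    have hMprime : Ideal.IsPrime (Ideal.comap (Ideal.Quotient.mk I) Mbar) := by
      have : Ideal.IsPrime Mbar := by
        constructor
        · intro h
          apply hz₀
          have : (1 : S ⧸ I) ∈ Mbar := h ▸ Submodule.mem_top
          rw [hMbar, mem_annE, one_mul] at this
          exact this
        · intro a b hab
          by_cases hb : b ∈ Mbar
          · exact Or.inr hb
          left
          have hbw : b * Ideal.Quotient.mk I y ≠ 0 := by
            rw [hMbar, mem_annE] at hb; exact hb
          obtain ⟨zb, hzb⟩ := Ideal.Quotient.mk_surjective (I := I) b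
          have hkey : Ideal.Quotient.mk I (zb * z₀ * x) = b * Ideal.Quotient.mk I y := by
            rw [show zb * z₀ * x = zb * y by rw [hydef]; ring,
              (Ideal.Quotient.mk I).map_mul, hzb]
          have hann𝒮 : annE (b * Ideal.Quotient.mk I y) ∈ 𝒮 := by
            refine ⟨zb * z₀, ?_, ?_⟩ <;> rw [hkey]
            · exact hbw
          have hle : Mbar ≤ annE (b * Ideal.Quotient.mk I y) := by
            intro t ht
            rw [hMbar, mem_annE] at ht
            rw [mem_annE, show t * (b * Ideal.Quotient.mk I y) = b * (t * Ideal.Quotient.mk I y) by ring, ht, mul_zero]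
          have heq : annE (b * Ideal.Quotient.mk I y) = Mbar :=
            le_antisymm (by
              by_contra hlt
              exact hmax _ hann𝒮 (lt_of_le_of_ne hle (fun h => hlt (le_of_eq h.symm)))) hle
          rw [hMbar] at heq ⊢
          rw [← heq, mem_annE, show a * (b * Ideal.Quotient.mk I y) = a * b * Ideal.Quotient.mk I y by ring]
          rw [hMbar, mem_annE] at hab
          exact hab
      exact this.comap (Ideal.Quotient.mk I)
    have hIM : I ≤ Ideal.comap (Ideal.Quotient.mk I) Mbar := fun a ha =>
      (hmemM a).mpr (I.mul_mem_right y ha)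
    rcases hyp (Ideal.comap (Ideal.Quotient.mk I) Mbar) hMprime hIM with htop | hsub
    · -- but R + M = S
      apply htop
      rw [AddSubgroup.eq_top_iff']
      intro s
      have hsxC : s * x ∈ C := C.mul_mem_left s hxC
      obtain ⟨r, hrR, a, ha, hsx⟩ := stepC (s * x) hsxC
      refine ⟨r, hrR, s - r, ?_, by ring⟩
      rw [hmemM]
      have : (s - r) * y = z₀ * (s * x) - z₀ * (r * x) := by rw [hydef]; ring
      rw [this, hsx, show z₀ * (x * r + a) - z₀ * (r * x) = z₀ * a by ring]
      exact I.mul_mem_left z₀ ha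
    · -- construct an element of (I :_R M) \ I
      obtain ⟨r₁, hr₁R, a₁, ha₁, hy⟩ := stepC y hyC
      have hy'R : x * r₁ ∈ R := R.mul_mem hxR hr₁R
      have hy'I : x * r₁ ∉ I := by
        intro h
        exact hyI (hy ▸ I.add_mem h ha₁)
      have hy'M : ∀ m ∈ Ideal.comap (Ideal.Quotient.mk I) Mbar, (x * r₁) * m ∈ I := by
        intro m hm
        rw [hmemM] at hm
        have : (x * r₁) * m = m * y - m * a₁ := by rw [hy]; ring
        rw [this]
        exact I.sub_mem hm (I.mul_mem_left m ha₁)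
      exact hy'I (hsub ⟨hy'R, hy'M⟩)
end

section
/- Let S be a commutative ring with identity, R a unitary subring of S, and I an ideal of S such that R/(I ∩ R) is a principal ideal ring and R + M ⊊ S for every prime ideal M of S containing I. Then I is an R-conductor ideal of S. -/
/-- `R + I` as a subring of `S`. -/
def ringAdd {S : Type*} [CommRing S] (R : Subring S) (I : Ideal S) : Subring S where
  carrier := {x : S | ∃ r ∈ R, ∃ a ∈ I, x = r + a}
  zero_mem' := ⟨0, R.zero_mem, 0, I.zero_mem, by simp⟩
  one_mem' := ⟨1, R.one_mem, 0, I.zero_mem, by simp⟩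
  add_mem' := by
    rintro x y ⟨r, hr, a, ha, rfl⟩ ⟨r', hr', a', ha', rfl⟩
    exact ⟨r + r', R.add_mem hr hr', a + a', I.add_mem ha ha', by ring⟩
  neg_mem' := by
    rintro x ⟨r, hr, a, ha, rfl⟩
    exact ⟨-r, R.neg_mem hr, -a, I.neg_mem ha, by ring⟩
  mul_mem' := by
    rintro x y ⟨r, hr, a, ha, rfl⟩ ⟨r', hr', a', ha', rfl⟩
    exact ⟨r * r', R.mul_mem hr hr',
      r * a' + a * r' + a * a',
      I.add_mem (I.add_mem (I.mul_mem_left r ha') (I.mul_mem_right r' ha))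
        (I.mul_mem_left a ha'),
      by ring⟩

/-- If `R/(I ∩ R)` is a principal ideal ring and `R + M ⊊ S` for every prime ideal `M` of
`S` containing `I`, then `I` is an `R`-conductor ideal of `S`. -/
theorem stmt_14 {S : Type*} [CommRing S] (R : Subring S) (I : Ideal S)
    (hP : IsPrincipalIdealRing (↥R ⧸ I.comap R.subtype))
    (hprop : ∀ M : Ideal S, M.IsPrime → I ≤ M → addSub R M ≠ ⊤) :
    IsConductorIdeal R I := by
  classical
  refine ⟨ringAdd R I, fun r hr => ⟨r, hr, 0, I.zero_mem, by simp⟩, ?_⟩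
  set I₀ : Ideal R := I.comap R.subtype with hI₀def
  set A : Ideal S := condIdeal (ringAdd R I).toAddSubgroup with hAdef
  have hmemA : ∀ x : S, x ∈ A ↔ ∀ s : S, ∃ r ∈ R, ∃ a ∈ I, x * s = r + a := by
    intro x; rfl
  have hIA : I ≤ A := by
    intro x hx
    rw [hmemA]
    exact fun s => ⟨0, R.zero_mem, x * s, I.mul_mem_right s hx, by simp⟩
  set q : R →+* R ⧸ I₀ := Ideal.Quotient.mk I₀ with hqdef
  set J : Ideal R := A.comap R.subtype with hJdef
  obtain ⟨ξ, hξ⟩ := (hP.principal (J.map q)).principal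
  have hξmem : ξ ∈ J.map q := by rw [hξ]; exact Ideal.subset_span rfl
  obtain ⟨c, hcJ, hcξ⟩ :=
    (Ideal.mem_map_iff_of_surjective q Ideal.Quotient.mk_surjective).mp hξmem
  have hcA : (c : S) ∈ A := hcJ
  -- Claim: every element of A is of the form c*t + i, t ∈ R, i ∈ I
  have claim : ∀ x ∈ A, ∃ t : R, x - (c : S) * t ∈ I := by
    intro x hx
    obtain ⟨r, hr, a, ha, hxe⟩ := (hmemA x).mp hx 1
    rw [mul_one] at hxe
    have hrA : r ∈ A := by
      have : x - a ∈ A := A.sub_mem hx (hIA ha)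
      simpa [hxe, add_sub_cancel_right] using this
    have hrJ : (⟨r, hr⟩ : R) ∈ J := hrA
    have : q ⟨r, hr⟩ ∈ J.map q := Ideal.mem_map_of_mem q hrJ
    rw [hξ, Submodule.mem_span_singleton] at this
    obtain ⟨u, hu⟩ := this
    rw [smul_eq_mul] at hu
    obtain ⟨t, rfl⟩ := Ideal.Quotient.mk_surjective u
    have hdiff : (⟨r, hr⟩ : R) - t * c ∈ I₀ := by
      rw [← Ideal.Quotient.eq]
      rw [← hcξ] at hu
      exact ((RingHom.map_mul q t c).trans hu).symm
    have hdiffS : (r : S) - (t : S) * (c : S) ∈ I := hdiff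
    refine ⟨t, ?_⟩
    have : x - (c : S) * t = ((r : S) - (t : S) * (c : S)) + a := by
      rw [hxe]; ring
    rw [this]
    exact I.add_mem hdiffS ha
  -- Show c ∈ I
  have hcI : (c : S) ∈ I := by
    by_contra hc
    set K : Ideal S :=
      { carrier := {s : S | (c : S) * s ∈ I}
        zero_mem' := by simp
        add_mem' := fun {x y} hx hy => by
          simpa [mul_add] using I.add_mem hx hy
        smul_mem' := fun r x hx => by
          simpa [smul_eq_mul, mul_left_comm] using I.mul_mem_left r hx } with hKdef
    have hKne : K ≠ ⊤ := by
      intro h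
      have h1 : (1 : S) ∈ K := h ▸ Submodule.mem_top
      have h2 : (c : S) * 1 ∈ I := h1
      exact hc (by simpa using h2)
    obtain ⟨M, hMmax, hKM⟩ := Ideal.exists_le_maximal K hKne
    have hIM : I ≤ M := fun i hi => hKM (I.mul_mem_left _ hi)
    refine hprop M hMmax.isPrime hIM ?_
    rw [AddSubgroup.eq_top_iff']
    intro s
    have hcs : (c : S) * s ∈ A := A.mul_mem_right s hcA
    obtain ⟨t, ht⟩ := claim _ hcs
    have : s - (t : S) ∈ K := by
      show (c : S) * (s - (t : S)) ∈ I
      simpa [mul_sub] using ht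
    exact ⟨(t : S), t.2, s - (t : S), hKM this, by ring⟩
  -- Conclude A = I
  refine le_antisymm hIA (fun x hx => ?_)
  obtain ⟨t, ht⟩ := claim x hx
  have h2 : (c : S) * t ∈ I := I.mul_mem_right _ hcI
  have := I.add_mem ht h2
  simpa using this
end

section
/- Let S be a Dedekind domain, R a subring of S that is a Dedekind domain, I an ideal of S with I ∩ R ≠ {0}, and M a prime ideal of S containing I. For each prime ideal Q of S containing I, set e_Q = v_Q((Q ∩ R)S). Then (I :_R M) ⊆ I if and only if e_M does not divide v_M(I) − 1, or (v_M(I) − 1)/e_M < v_Q(I)/e_Q for some prime ideal Q ≠ M of S containing I with Q ∩ R = M ∩ R. -/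
/-- The `P`-adic exponent `v_P(A)` of an ideal `A`: the largest `l ∈ ℕ` such that
`A ⊆ P ^ l`. -/
noncomputable def padicExp {D : Type*} [CommRing D] (P A : Ideal D) : ℕ :=
  sSup {l : ℕ | A ≤ P ^ l}

/-!
An element `x ≠ 0` lies in `(I :_S M)` but not in `I` exactly when `v_Q(x) ≥ v_Q(I)` for all
primes `Q ≠ M` and `v_M(x) = v_M(I) - 1`. For `x ∈ R` and a prime `Q` of `S` over
`P = Q ∩ R` one has `v_Q(xS) = e_Q · v_P(xR)`, so such an `x ∈ R` forces
`v_M(I) - 1 = e_M k` with `k = v_{M ∩ R}(x)`, and `v_Q(I) ≤ e_Q k` for every other `Q` over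
`M ∩ R`. Conversely, given such a `k`, the Chinese remainder theorem in `R` yields `x` with
`v_{M ∩ R}(x) = k` that is divisible by `I ∩ R` at every other prime of `R`; since
`(I ∩ R)S ⊆ I`, this handles the primes of `S` not lying over `M ∩ R`.
-/

open UniqueFactorizationMonoid

section DedekindDomain

variable {D : Type*} [CommRing D] [IsDedekindDomain D] {P Q A B : Ideal D}

theorem le_pow_iff_le_count_normalizedFactors [DecidableEq (Ideal D)] (hP : P.IsPrime)
    (hP0 : P ≠ ⊥) (hA : A ≠ ⊥) {n : ℕ} :
    A ≤ P ^ n ↔ n ≤ (normalizedFactors A).count P := by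
  rw [← Ideal.dvd_iff_le, dvd_iff_normalizedFactors_le_normalizedFactors (pow_ne_zero n hP0) hA,
    (Ideal.prime_of_isPrime hP0 hP).irreducible.normalizedFactors_pow, normalize_eq,
    ← Multiset.le_count_iff_replicate_le]

theorem padicExp_eq_count_normalizedFactors [DecidableEq (Ideal D)] (hP : P.IsPrime)
    (hP0 : P ≠ ⊥) (hA : A ≠ ⊥) : padicExp P A = (normalizedFactors A).count P := by
  have : {l : ℕ | A ≤ P ^ l} = Set.Iic ((normalizedFactors A).count P) :=
    Set.ext fun _ => le_pow_iff_le_count_normalizedFactors hP hP0 hA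
  rw [padicExp, this, csSup_Iic]

theorem le_pow_iff_le_padicExp (hP : P.IsPrime) (hP0 : P ≠ ⊥) (hA : A ≠ ⊥) {n : ℕ} :
    A ≤ P ^ n ↔ n ≤ padicExp P A := by
  classical
  rw [padicExp_eq_count_normalizedFactors hP hP0 hA,
    le_pow_iff_le_count_normalizedFactors hP hP0 hA]

theorem le_pow_padicExp (hP : P.IsPrime) (hP0 : P ≠ ⊥) (hA : A ≠ ⊥) :
    A ≤ P ^ padicExp P A :=
  (le_pow_iff_le_padicExp hP hP0 hA).mpr le_rfl

theorem padicExp_anti (hP : P.IsPrime) (hP0 : P ≠ ⊥) (hA : A ≠ ⊥) (h : A ≤ B) :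
    padicExp P B ≤ padicExp P A :=
  (le_pow_iff_le_padicExp hP hP0 hA).mp
    (h.trans (le_pow_padicExp hP hP0 (ne_bot_of_le_ne_bot hA h)))

theorem padicExp_mul (hP : P.IsPrime) (hP0 : P ≠ ⊥) (hA : A ≠ ⊥) (hB : B ≠ ⊥) :
    padicExp P (A * B) = padicExp P A + padicExp P B := by
  classical
  rw [padicExp_eq_count_normalizedFactors hP hP0 hA,
    padicExp_eq_count_normalizedFactors hP hP0 hB,
    padicExp_eq_count_normalizedFactors hP hP0 (mul_ne_zero hA hB),
    normalizedFactors_mul hA hB, Multiset.count_add]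

theorem padicExp_pow (hP : P.IsPrime) (hP0 : P ≠ ⊥) (hA : A ≠ ⊥) (j : ℕ) :
    padicExp P (A ^ j) = j * padicExp P A := by
  classical
  rw [padicExp_eq_count_normalizedFactors hP hP0 hA,
    padicExp_eq_count_normalizedFactors hP hP0 (pow_ne_zero j hA),
    normalizedFactors_pow, Multiset.count_nsmul]

theorem padicExp_self (hP : P.IsPrime) (hP0 : P ≠ ⊥) : padicExp P P = 1 := by
  classical
  rw [padicExp_eq_count_normalizedFactors hP hP0 hP0,
    normalizedFactors_irreducible (Ideal.prime_of_isPrime hP0 hP).irreducible, normalize_eq,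
    Multiset.count_singleton_self]

theorem one_le_padicExp_iff (hP : P.IsPrime) (hP0 : P ≠ ⊥) (hA : A ≠ ⊥) :
    1 ≤ padicExp P A ↔ A ≤ P := by
  rw [← le_pow_iff_le_padicExp hP hP0 hA, pow_one]

theorem padicExp_eq_zero_iff (hP : P.IsPrime) (hP0 : P ≠ ⊥) (hA : A ≠ ⊥) :
    padicExp P A = 0 ↔ ¬ A ≤ P := by
  rw [← one_le_padicExp_iff hP hP0 hA]
  omega

theorem padicExp_eq_zero_of_ne (hP : P.IsPrime) (hP0 : P ≠ ⊥) (hQ : Q.IsPrime) (hQ0 : Q ≠ ⊥)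
    (hPQ : P ≠ Q) : padicExp P Q = 0 :=
  (padicExp_eq_zero_iff hP hP0 hQ0).mpr fun hQP =>
    hPQ ((hQ.isMaximal hQ0).eq_of_le hP.ne_top hQP).symm

theorem le_iff_forall_padicExp_le (hA : A ≠ ⊥) (hB : B ≠ ⊥) :
    A ≤ B ↔ ∀ P : Ideal D, P.IsPrime → P ≠ ⊥ → padicExp P B ≤ padicExp P A := by
  classical
  refine ⟨fun h P hP hP0 => padicExp_anti hP hP0 hA h, fun h => ?_⟩
  rw [← Ideal.dvd_iff_le, dvd_iff_normalizedFactors_le_normalizedFactors hB hA,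
    Multiset.le_iff_count]
  intro P
  by_cases hPB : P ∈ normalizedFactors B
  · have hP : Prime P := prime_of_normalized_factor P hPB
    have hPp : P.IsPrime := Ideal.isPrime_of_prime hP
    rw [← padicExp_eq_count_normalizedFactors hPp hP.ne_zero hB,
      ← padicExp_eq_count_normalizedFactors hPp hP.ne_zero hA]
    exact h P hPp hP.ne_zero
  · simp [Multiset.count_eq_zero_of_notMem hPB]

theorem mul_le_and_not_le_iff {M : Ideal D} (hM : M.IsPrime) (hM0 : M ≠ ⊥) (hA : A ≠ ⊥)
    (hB : B ≠ ⊥) :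
    A * M ≤ B ∧ ¬ A ≤ B ↔ padicExp M A + 1 = padicExp M B ∧
      ∀ P : Ideal D, P.IsPrime → P ≠ ⊥ → P ≠ M → padicExp P B ≤ padicExp P A := by
  have hAM : A * M ≠ ⊥ := mul_ne_zero hA hM0
  have hmul : ∀ P : Ideal D, P.IsPrime → P ≠ ⊥ →
      padicExp P (A * M) = padicExp P A + if P = M then 1 else 0 := by
    intro P hP hP0
    rw [padicExp_mul hP hP0 hA hM0]
    split_ifs with hPM
    · rw [hPM, padicExp_self hM hM0]
    · rw [padicExp_eq_zero_of_ne hP hP0 hM hM0 hPM]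
  rw [le_iff_forall_padicExp_le hAM hB, le_iff_forall_padicExp_le hA hB]
  constructor
  · rintro ⟨hle, hnot⟩
    push Not at hnot
    obtain ⟨P, hP, hP0, hlt⟩ := hnot
    have hPM : P = M := by
      by_contra hPM
      have := hle P hP hP0
      rw [hmul P hP hP0, if_neg hPM] at this
      omega
    subst hPM
    have := hle P hP hP0
    rw [hmul P hP hP0, if_pos rfl] at this
    refine ⟨by omega, fun Q hQ hQ0 hQP => ?_⟩
    have := hle Q hQ hQ0
    rwa [hmul Q hQ hQ0, if_neg hQP, add_zero] at this
  · rintro ⟨hexp, hle⟩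
    refine ⟨fun P hP hP0 => ?_, fun h => ?_⟩
    · rw [hmul P hP hP0]
      split_ifs with hPM
      · rw [hPM]; omega
      · simpa using hle P hP hP0 hPM
    · have := h M hM hM0
      omega

theorem exists_padicExp_eq_and_forall_le (hP : P.IsPrime) (hP0 : P ≠ ⊥) {J : Ideal D}
    (hJ : J ≠ ⊥) (k : ℕ) :
    ∃ y : D, y ≠ 0 ∧ padicExp P (Ideal.span {y}) = k ∧
      ∀ Q : Ideal D, Q.IsPrime → Q ≠ ⊥ → Q ≠ P →
        padicExp Q J ≤ padicExp Q (Ideal.span {y}) := by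
  classical
  obtain ⟨a, haP, haP'⟩ := Ideal.exists_mem_pow_notMem_pow_succ P hP0 hP.ne_top k
  set T := (normalizedFactors J).toFinset
  have hprime : ∀ Q ∈ insert P T, Prime (id Q) := by
    intro Q hQ
    rcases Finset.mem_insert.mp hQ with rfl | hQT
    · exact Ideal.prime_of_isPrime hP0 hP
    · exact prime_of_normalized_factor Q (Multiset.mem_toFinset.mp hQT)
  obtain ⟨y, hy⟩ := IsDedekindDomain.exists_forall_sub_mem_ideal id
    (fun Q => if Q = P then k + 1 else padicExp Q J) hprime (fun _ _ _ _ h => h)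
    (fun Q => if (Q : Ideal D) = P then a else 0)
  have hyP : y - a ∈ P ^ (k + 1) := by simpa using hy P (Finset.mem_insert_self P T)
  have hyk : y ∈ P ^ k := by
    simpa using add_mem (Ideal.pow_le_pow_right k.le_succ hyP) haP
  have hyk' : y ∉ P ^ (k + 1) := fun h => haP' (by simpa using sub_mem h hyP)
  have hy0 : y ≠ 0 := by
    rintro rfl
    exact hyk' (zero_mem _)
  have hspan : Ideal.span {y} ≠ ⊥ := by rwa [Ne, Ideal.span_singleton_eq_bot]
  refine ⟨y, hy0, le_antisymm ?_ ?_, fun Q hQ hQ0 hQP => ?_⟩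
  · by_contra! h
    exact hyk' ((Ideal.span_singleton_le_iff_mem _).mp
      ((le_pow_iff_le_padicExp hP hP0 hspan).mpr h))
  · exact (le_pow_iff_le_padicExp hP hP0 hspan).mp ((Ideal.span_singleton_le_iff_mem _).mpr hyk)
  · by_cases hQT : Q ∈ T
    · have := hy Q (Finset.mem_insert_of_mem hQT)
      simp only [id, if_neg hQP, sub_zero] at this
      exact (le_pow_iff_le_padicExp hQ hQ0 hspan).mp
        ((Ideal.span_singleton_le_iff_mem _).mpr this)
    · rw [padicExp_eq_count_normalizedFactors hQ hQ0 hJ,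
        Multiset.count_eq_zero_of_notMem (fun h => hQT (Multiset.mem_toFinset.mpr h))]
      exact Nat.zero_le _

end DedekindDomain

section Extension

variable {R S : Type*} [CommRing R] [CommRing S] [IsDedekindDomain S]
  {f : R →+* S}

theorem padicExp_map [IsDedekindDomain R] (hf : Function.Injective f) {Q : Ideal S}
    (hQ : Q.IsPrime) (hQ0 : Q ≠ ⊥) (hQR : Q.comap f ≠ ⊥) {J : Ideal R} (hJ : J ≠ ⊥) :
    padicExp Q (J.map f) = padicExp Q ((Q.comap f).map f) * padicExp (Q.comap f) J := by
  set P := Q.comap f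
  have hP : P.IsPrime := Ideal.IsPrime.comap f
  set k := padicExp P J
  obtain ⟨C, hC⟩ : P ^ k ∣ J := Ideal.dvd_iff_le.mpr (le_pow_padicExp hP hQR hJ)
  have hC0 : C ≠ ⊥ := by
    rintro rfl
    exact hJ (by simpa using hC)
  -- `C` is the part of `J` prime to `P`, so `C S` is prime to `Q`.
  have hCP : ¬ C ≤ P := by
    have h := congrArg (padicExp P) hC
    rw [padicExp_mul hP hQR (pow_ne_zero k hQR) hC0, padicExp_pow hP hQR hQR,
      padicExp_self hP hQR, mul_one, left_eq_add,
      padicExp_eq_zero_iff hP hQR hC0] at h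
    exact h
  have hmap0 : ∀ {A : Ideal R}, A ≠ ⊥ → A.map f ≠ ⊥ := fun hA => by
    rwa [Ne, Ideal.map_eq_bot_iff_of_injective hf]
  rw [hC, Ideal.map_mul, Ideal.map_pow,
    padicExp_mul hQ hQ0 (pow_ne_zero k (hmap0 hQR)) (hmap0 hC0), padicExp_pow hQ hQ0 (hmap0 hQR),
    (padicExp_eq_zero_iff hQ hQ0 (hmap0 hC0)).mpr (fun h => hCP (Ideal.map_le_iff_le_comap.mp h)),
    add_zero, mul_comm]

theorem padicExp_span_map [IsDedekindDomain R] (hf : Function.Injective f) {Q : Ideal S}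
    (hQ : Q.IsPrime) (hQ0 : Q ≠ ⊥) (hQR : Q.comap f ≠ ⊥) {x : R} (hx : x ≠ 0) :
    padicExp Q (Ideal.span {f x}) =
      padicExp Q ((Q.comap f).map f) * padicExp (Q.comap f) (Ideal.span {x}) := by
  rw [← padicExp_map hf hQ hQ0 hQR (by rwa [Ne, Ideal.span_singleton_eq_bot]), Ideal.map_span,
    Set.image_singleton]

theorem one_le_padicExp_map_comap (hf : Function.Injective f) {Q : Ideal S} (hQ : Q.IsPrime)
    (hQ0 : Q ≠ ⊥) (hQR : Q.comap f ≠ ⊥) : 1 ≤ padicExp Q ((Q.comap f).map f) :=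
  (one_le_padicExp_iff hQ hQ0 (by rwa [Ne, Ideal.map_eq_bot_iff_of_injective hf])).mpr
    Ideal.map_comap_le

theorem exists_mem_colon_notMem_iff [IsDedekindDomain R] (hf : Function.Injective f)
    {I M : Ideal S} (hI : I.comap f ≠ ⊥) (hM : M.IsPrime) (hIM : I ≤ M) :
    (∃ x : R, Ideal.span {f x} * M ≤ I ∧ ¬ Ideal.span {f x} ≤ I) ↔
      ∃ k : ℕ, padicExp M I = padicExp M ((M.comap f).map f) * k + 1 ∧
        ∀ Q : Ideal S, Q.IsPrime → I ≤ Q → Q ≠ M → Q.comap f = M.comap f →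
          padicExp Q I ≤ padicExp Q ((Q.comap f).map f) * k := by
  have hI0 : I ≠ ⊥ := fun h => hI (by rw [h]; exact Ideal.comap_bot_of_injective f hf)
  have hQ0 : ∀ {Q : Ideal S}, I ≤ Q → Q ≠ ⊥ := fun hIQ => ne_bot_of_le_ne_bot hI0 hIQ
  have hQR : ∀ {Q : Ideal S}, I ≤ Q → Q.comap f ≠ ⊥ := fun hIQ =>
    ne_bot_of_le_ne_bot hI (Ideal.comap_mono hIQ)
  have hspan : ∀ {x : R}, x ≠ 0 → Ideal.span {f x} ≠ ⊥ := fun hx => by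
    rwa [Ne, Ideal.span_singleton_eq_bot, map_eq_zero_iff f hf]
  constructor
  · rintro ⟨x, hx⟩
    have hx0 : x ≠ 0 := by
      rintro rfl
      exact hx.2 (by simp)
    rw [mul_le_and_not_le_iff hM (hQ0 hIM) (hspan hx0) hI0,
      padicExp_span_map hf hM (hQ0 hIM) (hQR hIM) hx0] at hx
    refine ⟨_, hx.1.symm, fun Q hQ hIQ hQM hQP => ?_⟩
    have := hx.2 Q hQ (hQ0 hIQ) hQM
    rw [hQP]
    rwa [padicExp_span_map hf hQ (hQ0 hIQ) (hQR hIQ) hx0, hQP] at this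
  · rintro ⟨k, hn, hk⟩
    obtain ⟨y, hy, hyM, hyI⟩ :=
      exists_padicExp_eq_and_forall_le (Ideal.IsPrime.comap f) (hQR hIM) hI k
    refine ⟨y, (mul_le_and_not_le_iff hM (hQ0 hIM) (hspan hy) hI0).mpr
      ⟨by rw [padicExp_span_map hf hM (hQ0 hIM) (hQR hIM) hy, hyM, hn],
        fun Q hQ hQ0' hQM => ?_⟩⟩
    by_cases hIQ : I ≤ Q
    · rw [padicExp_span_map hf hQ hQ0' (hQR hIQ) hy]
      by_cases hQP : Q.comap f = M.comap f
      · rw [hQP, hyM, ← hQP]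
        exact hk Q hQ hIQ hQM hQP
      · -- Away from `M ∩ R`, `y` is divisible by `I ∩ R`, and `(I ∩ R) S ⊆ I`.
        calc padicExp Q I ≤ padicExp Q ((I.comap f).map f) :=
            padicExp_anti hQ hQ0' (by rwa [Ne, Ideal.map_eq_bot_iff_of_injective hf])
              Ideal.map_comap_le
          _ = _ := padicExp_map hf hQ hQ0' (hQR hIQ) hI
          _ ≤ _ := Nat.mul_le_mul_left _ (hyI _ (Ideal.IsPrime.comap f) (hQR hIQ) hQP)
    · rw [(padicExp_eq_zero_iff hQ hQ0' hI0).mpr hIQ]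
      exact Nat.zero_le _

end Extension

theorem intCast_dvd_sub_one_iff {e n : ℕ} (hn : 1 ≤ n) :
    (e : ℤ) ∣ (n : ℤ) - 1 ↔ ∃ k : ℕ, n = e * k + 1 := by
  rw [← Nat.cast_one, ← Nat.cast_sub hn, Int.natCast_dvd_natCast]
  exact ⟨fun ⟨k, hk⟩ => ⟨k, by omega⟩, fun ⟨k, hk⟩ => ⟨k, by omega⟩⟩

theorem sub_one_div_lt_div_iff {e e' n a k : ℕ} (he : 0 < e) (he' : 0 < e')
    (hn : n = e * k + 1) : ((n : ℚ) - 1) / e < a / e' ↔ e' * k < a := by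
  subst hn
  push_cast
  rw [add_sub_cancel_right, mul_div_cancel_left₀ _ (by positivity), lt_div_iff₀ (by positivity),
    mul_comm]
  exact_mod_cast Iff.rfl

theorem stmt_17_general {S : Type*} [CommRing S] [IsDedekindDomain S]
    (R : Subring S) [IsDedekindDomain ↥R] (I : Ideal S)
    (hI : I.comap R.subtype ≠ ⊥) (M : Ideal S) (hM : M.IsPrime) (hIM : I ≤ M) :
    {x : S | x ∈ R ∧ ∀ m ∈ M, x * m ∈ I} ⊆ (I : Set S) ↔
      (¬ ((padicExp M (Ideal.map R.subtype (M.comap R.subtype)) : ℤ) ∣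
            (padicExp M I : ℤ) - 1) ∨
        ∃ Q : Ideal S, Q.IsPrime ∧ I ≤ Q ∧ Q ≠ M ∧
          Q.comap R.subtype = M.comap R.subtype ∧
          ((padicExp M I : ℚ) - 1) /
              (padicExp M (Ideal.map R.subtype (M.comap R.subtype)) : ℚ) <
            (padicExp Q I : ℚ) /
              (padicExp Q (Ideal.map R.subtype (Q.comap R.subtype)) : ℚ)) := by
  have hI0 : I ≠ ⊥ := by
    rintro rfl
    exact hI (Ideal.comap_bot_of_injective _ Subtype.val_injective)
  have he : ∀ {Q : Ideal S}, Q.IsPrime → I ≤ Q →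
      0 < padicExp Q (Ideal.map R.subtype (Q.comap R.subtype)) := fun hQ hIQ =>
    one_le_padicExp_map_comap Subtype.val_injective hQ (ne_bot_of_le_ne_bot hI0 hIQ)
      (ne_bot_of_le_ne_bot hI (Ideal.comap_mono hIQ))
  have hcolon : {x : S | x ∈ R ∧ ∀ m ∈ M, x * m ∈ I} ⊆ (I : Set S) ↔
      ¬ ∃ x : R, Ideal.span {R.subtype x} * M ≤ I ∧ ¬ Ideal.span {R.subtype x} ≤ I := by
    simp [Set.subset_def, Ideal.span_singleton_mul_le_iff, imp.swap (a := _ ∈ R)]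
  rw [hcolon, exists_mem_colon_notMem_iff Subtype.val_injective hI hM hIM, not_iff_comm,
    not_or, not_not, intCast_dvd_sub_one_iff
      ((one_le_padicExp_iff hM (ne_bot_of_le_ne_bot hI0 hIM) hI0).mpr hIM)]
  constructor
  · rintro ⟨⟨k, hk⟩, hQ⟩
    exact ⟨k, hk, fun Q hQp hIQ hQM hQP => not_lt.mp fun hlt => hQ
      ⟨Q, hQp, hIQ, hQM, hQP, (sub_one_div_lt_div_iff (he hM hIM) (he hQp hIQ) hk).mpr hlt⟩⟩
  · rintro ⟨k, hk, hQ⟩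
    exact ⟨⟨k, hk⟩, fun ⟨Q, hQp, hIQ, hQM, hQP, hlt⟩ => not_lt.mpr (hQ Q hQp hIQ hQM hQP)
      ((sub_one_div_lt_div_iff (he hM hIM) (he hQp hIQ) hk).mp hlt)⟩

/-- Let `S` and `R ⊆ S` be Dedekind domains, `I` an ideal of `S` with `I ∩ R ≠ 0`, and `M`
a prime ideal of `S` containing `I`. With `e_Q = v_Q((Q ∩ R)S)`, we have `(I :_R M) ⊆ I`
if and only if `e_M ∤ (v_M(I) - 1)`, or `(v_M(I) - 1)/e_M < v_Q(I)/e_Q` for some prime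
ideal `Q ≠ M` of `S` containing `I` with `Q ∩ R = M ∩ R`. -/
theorem stmt_17 {S : Type*} [CommRing S] [IsDomain S] [IsDedekindDomain S]
    (R : Subring S) [IsDedekindDomain ↥R] (I : Ideal S)
    (hI : I.comap R.subtype ≠ ⊥) (M : Ideal S) (hM : M.IsPrime) (hIM : I ≤ M) :
    {x : S | x ∈ R ∧ ∀ m ∈ M, x * m ∈ I} ⊆ (I : Set S) ↔
      (¬ ((padicExp M (Ideal.map R.subtype (M.comap R.subtype)) : ℤ) ∣
            (padicExp M I : ℤ) - 1) ∨
        ∃ Q : Ideal S, Q.IsPrime ∧ I ≤ Q ∧ Q ≠ M ∧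
          Q.comap R.subtype = M.comap R.subtype ∧
          ((padicExp M I : ℚ) - 1) /
              (padicExp M (Ideal.map R.subtype (M.comap R.subtype)) : ℚ) <
            (padicExp Q I : ℚ) /
              (padicExp Q (Ideal.map R.subtype (Q.comap R.subtype)) : ℚ)) :=
  stmt_17_general R I hI M hM hIM
end
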